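/- arXiv:2605.13085 — 3 statements merged into one kernel-verified Lean document; each statement's English description precedes it below -/
import Mathlib

section
/- Consider the maps $f_1(x)=2x$, $f_2(x)=4x$ on $\mathbb{R}$. The sets $K_1=\{2^n : n\in\mathbb{Z}\}$ and $K_2=\{0\}\cup K_1$ both satisfy $K=f_1(K)\cup f_2(K)$, yet neither $K_1$ nor $K_2$ can be written as a finite union of forward orbits $\fo_\F(a_1)\cup\cdots\cup\fo_\F(a_N)$ with $a_k\in K$. -/
/-- The forward orbit of `a` under a family of maps. -/
def forwardOrbit {X ι : Type*} (f : ι → X → X) (a : X) : Set X :=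
  {x | ∃ w : List ι, w ≠ [] ∧ x = w.foldr (fun i y => f i y) a}

noncomputable def f5 : Fin 2 → ℝ → ℝ := ![fun x => 2 * x, fun x => 4 * x]

def K1 : Set ℝ := {x | ∃ n : ℤ, x = (2 : ℝ) ^ n}

def K2 : Set ℝ := {0} ∪ K1

/-! Both maps are multiplications by powers of two, so the forward orbit of `a` is
`{2 ^ m * a | m ≥ 1}`, and an invariant set only needs to be stable under doubling and halving.
A finite union of orbits of points of `K2` misses every `2 ^ n` with `n` at most the smallest
exponent among the nonzero base points. -/

lemma f5_apply (i : Fin 2) (x : ℝ) : f5 i x = 2 ^ (i.val + 1) * x := by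
  fin_cases i <;> norm_num [f5]

lemma foldr_f5 (w : List (Fin 2)) (a : ℝ) :
    w.foldr (fun i y => f5 i y) a = 2 ^ (w.map (·.val + 1)).sum * a := by
  induction w with
  | nil => simp
  | cons i w ih =>
    rw [List.foldr_cons, ih, f5_apply, List.map_cons, List.sum_cons, pow_add]
    ring

lemma mem_forwardOrbit_f5 {a x : ℝ} :
    x ∈ forwardOrbit f5 a ↔ ∃ m : ℕ, x = 2 ^ (m + 1) * a := by
  constructor
  · rintro ⟨_ | ⟨i, w⟩, hw, rfl⟩
    · exact absurd rfl hw
    · refine ⟨i.val + (w.map (·.val + 1)).sum, ?_⟩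
      rw [foldr_f5, List.map_cons, List.sum_cons]
      ring
  · rintro ⟨m, rfl⟩
    refine ⟨List.replicate (m + 1) 0, by simp, ?_⟩
    simp [foldr_f5]

lemma forwardOrbit_f5_zero : forwardOrbit f5 0 = {0} := by
  ext x
  simp [mem_forwardOrbit_f5]

lemma two_zpow_mem_forwardOrbit_f5_iff {k n : ℤ} :
    (2 : ℝ) ^ n ∈ forwardOrbit f5 (2 ^ k) ↔ k < n := by
  have h2 : (2 : ℝ) ≠ 0 := two_ne_zero
  have hinj : ∀ m : ℕ, (2 : ℝ) ^ n = 2 ^ (m + 1) * 2 ^ k ↔ n = m + 1 + k := fun m => by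
    rw [← zpow_natCast, ← zpow_add₀ h2, zpow_right_inj₀ two_pos one_lt_two.ne']
    push_cast
    rfl
  simp only [mem_forwardOrbit_f5, hinj]
  constructor
  · rintro ⟨m, rfl⟩
    omega
  · intro h
    exact ⟨(n - k - 1).toNat, by omega⟩

lemma image_f5_union_eq {S : Set ℝ} (hS : ∀ x, 2 * x ∈ S ↔ x ∈ S) :
    f5 0 '' S ∪ f5 1 '' S = S := by
  have h0 : ∀ x, f5 0 x = 2 * x := fun x => by simp [f5_apply]
  have h1 : ∀ x, f5 1 x = 2 * (2 * x) := fun x => by rw [f5_apply]; norm_num; ring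
  ext x
  constructor
  · rintro (⟨y, hy, rfl⟩ | ⟨y, hy, rfl⟩)
    · rwa [h0, hS]
    · rwa [h1, hS, hS]
  · intro hx
    refine Or.inl ⟨x / 2, (hS _).1 ?_, ?_⟩ <;> simp [h0, mul_div_cancel₀, hx]

lemma two_mul_mem_K1_iff (x : ℝ) : 2 * x ∈ K1 ↔ x ∈ K1 := by
  have h2 : (2 : ℝ) ≠ 0 := two_ne_zero
  constructor
  · rintro ⟨n, hn⟩
    exact ⟨n - 1, by rw [zpow_sub_one₀ h2, ← hn]; field_simp⟩
  · rintro ⟨n, rfl⟩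
    exact ⟨n + 1, by rw [zpow_add_one₀ h2, mul_comm]⟩

lemma two_mul_mem_K2_iff (x : ℝ) : 2 * x ∈ K2 ↔ x ∈ K2 := by
  simp [K2, two_mul_mem_K1_iff]

lemma not_exists_iUnion_forwardOrbit_f5_eq {K : Set ℝ} (hK1 : K1 ⊆ K) (hK2 : K ⊆ K2) :
    ¬ ∃ (N : ℕ) (a : Fin N → ℝ), (∀ k, a k ∈ K) ∧
      K = ⋃ k : Fin N, forwardOrbit f5 (a k) := by
  rintro ⟨N, a, ha, hU⟩
  have hexp : ∀ k, ∃ n : ℤ, a k = 0 ∨ a k = 2 ^ n := fun k => by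
    rcases hK2 (ha k) with h | ⟨n, hn⟩
    exacts [⟨0, Or.inl h⟩, ⟨n, Or.inr hn⟩]
  choose g hg using hexp
  obtain ⟨M, hM⟩ : ∃ M : ℤ, ∀ k, M ≤ g k := Finite.exists_ge g
  have hmem : (2 : ℝ) ^ M ∈ ⋃ k, forwardOrbit f5 (a k) := hU ▸ hK1 ⟨M, rfl⟩
  obtain ⟨k, hk⟩ := Set.mem_iUnion.1 hmem
  rcases hg k with h0 | hpow
  · rw [h0, forwardOrbit_f5_zero] at hk
    exact zpow_ne_zero M two_ne_zero hk
  · rw [hpow, two_zpow_mem_forwardOrbit_f5_iff] at hk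
    exact (hM k).not_gt hk

theorem stmt5 :
    (K1 = f5 0 '' K1 ∪ f5 1 '' K1) ∧ (K2 = f5 0 '' K2 ∪ f5 1 '' K2) ∧
      (∀ K ∈ ({K1, K2} : Set (Set ℝ)),
        ¬ ∃ (N : ℕ) (a : Fin N → ℝ), (∀ k, a k ∈ K) ∧
          K = ⋃ k : Fin N, forwardOrbit f5 (a k)) := by
  refine ⟨(image_f5_union_eq two_mul_mem_K1_iff).symm,
    (image_f5_union_eq two_mul_mem_K2_iff).symm, ?_⟩
  rintro K (rfl | rfl)
  · exact not_exists_iUnion_forwardOrbit_f5_eq subset_rfl Set.subset_union_right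
  · exact not_exists_iUnion_forwardOrbit_f5_eq Set.subset_union_right subset_rfl
end

section
/- Let $r\in\mathbb{Z}$ with $|r|>1$, let $b_1,\dots,b_m\in\mathbb{Z}$ satisfy $b_i\not\equiv b_j \pmod{r}$ for all $i\neq j$, and let $f_i(x)=rx+b_i$. Then for every $a\in\mathbb{Q}$ and all $i\neq j$, the set $f_i(\fo_\F(a)) \cap f_j(\fo_\F(a))$ is finite. -/
/-- The integer part `c` of the orbit point `r ^ n * x + c` reached along a word. -/
def wordOffset {ι : Type*} (r : ℤ) (b : ι → ℤ) : List ι → ℤ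
  | [] => 0
  | i :: w => r * wordOffset r b w + b i

theorem foldr_affine_eq {ι R : Type*} [CommRing R] (r : ℤ) (b : ι → ℤ) (x : R) (w : List ι) :
    w.foldr (fun i y => (r : R) * y + b i) x = (r : R) ^ w.length * x + wordOffset r b w := by
  induction w with
  | nil => simp [wordOffset]
  | cons i w ih =>
    simp only [List.foldr_cons, ih, wordOffset, List.length_cons]
    push_cast
    ring

-- Every prime power dividing `q` has exponent `< q`, so `r ^ q` supplies all the factors of `r` it needs.
theorem Nat.dvd_pow_mul_of_dvd_pow_mul {q r k m n : ℕ} (hq : q ≠ 0) (hqn : q ≤ n)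
    (h : q ∣ r ^ m * k) : q ∣ r ^ n * k := by
  rcases eq_or_ne r 0 with rfl | hr
  · simp [zero_pow (by omega : n ≠ 0)]
  rcases eq_or_ne k 0 with rfl | hk
  · simp
  rw [← Nat.factorization_le_iff_dvd hq (by positivity)] at h ⊢
  intro p
  have hp := h p
  simp only [Nat.factorization_mul (pow_ne_zero _ hr) hk, Nat.factorization_pow,
    Finsupp.add_apply, Finsupp.smul_apply, smul_eq_mul] at hp ⊢
  by_cases hrp : r.factorization p = 0
  · simpa [hrp] using hp
  · calc q.factorization p ≤ q := (Nat.factorization_lt p hq).le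
      _ ≤ n * r.factorization p := hqn.trans (Nat.le_mul_of_pos_right n (Nat.pos_of_ne_zero hrp))
      _ ≤ n * r.factorization p + k.factorization p := Nat.le_add_right _ _

theorem Int.dvd_pow_mul_of_dvd_pow_mul {q : ℕ} {r k : ℤ} {m n : ℕ} (hq : q ≠ 0) (hqn : q ≤ n)
    (h : (q : ℤ) ∣ r ^ m * k) : (q : ℤ) ∣ r ^ n * k := by
  rw [Int.natCast_dvd, Int.natAbs_mul, Int.natAbs_pow] at h ⊢
  exact Nat.dvd_pow_mul_of_dvd_pow_mul hq hqn h

theorem dvd_sub_of_pow_mul_add_eq_of_le {r : ℤ} {a : ℚ} {M N : ℕ} (hMN : M ≤ N) (hM : a.den < M)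
    {c d : ℤ} (h : (r : ℚ) ^ N * a + c = r ^ M * a + d) : r ∣ d - c := by
  obtain ⟨K, rfl⟩ := Nat.exists_eq_add_of_le hMN
  obtain ⟨n, rfl⟩ : ∃ n, M = n + 1 := Nat.exists_eq_succ_of_ne_zero (by omega)
  have hint : (d - c) * (a.den : ℤ) = r ^ (n + 1) * ((r ^ K - 1) * a.num) := by
    have hq : ((d - c : ℤ) : ℚ) = r ^ (n + 1) * (r ^ K - 1) * a := by
      push_cast
      linear_combination -h
    have := congrArg (· * (a.den : ℚ)) hq
    simp only [mul_assoc, Rat.mul_den_eq_num] at this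
    exact_mod_cast this
  obtain ⟨l, hl⟩ := Int.dvd_pow_mul_of_dvd_pow_mul a.den_ne_zero (by omega : a.den ≤ n)
    (Dvd.intro_left _ hint)
  refine ⟨l, mul_right_cancel₀ (Int.natCast_ne_zero.mpr a.den_ne_zero) ?_⟩
  linear_combination hint + r * hl

theorem dvd_sub_of_pow_mul_add_eq {r : ℤ} {a : ℚ} {M N : ℕ} (hN : a.den < N) (hM : a.den < M)
    {c d : ℤ} (h : (r : ℚ) ^ N * a + c = r ^ M * a + d) : r ∣ d - c := by
  rcases le_total M N with hMN | hNM
  · exact dvd_sub_of_pow_mul_add_eq_of_le hMN hM h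
  · exact dvd_sub_comm.mp (dvd_sub_of_pow_mul_add_eq_of_le hNM hN h.symm)

theorem stmt7_general {m : ℕ} (r : ℤ) (b : Fin m → ℤ)
    (hb : ∀ i j : Fin m, i ≠ j → ¬ r ∣ (b i - b j))
    (a : ℚ) (i j : Fin m) (hij : i ≠ j) :
    Set.Finite
      ((fun x : ℝ => (r : ℝ) * x + (b i : ℝ)) ''
          forwardOrbit (fun k : Fin m => fun x : ℝ => (r : ℝ) * x + (b k : ℝ)) (a : ℝ) ∩
        (fun x : ℝ => (r : ℝ) * x + (b j : ℝ)) ''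
          forwardOrbit (fun k : Fin m => fun x : ℝ => (r : ℝ) * x + (b k : ℝ)) (a : ℝ)) := by
  let orbitPoint (w : List (Fin m)) : ℝ := w.foldr (fun k y => (r : ℝ) * y + b k) a
  refine ((List.finite_length_le (Fin m) a.den).image orbitPoint).subset ?_
  rintro v ⟨⟨x, ⟨w, -, rfl⟩, rfl⟩, ⟨y, ⟨u, -, rfl⟩, hv⟩⟩
  change orbitPoint (j :: u) = orbitPoint (i :: w) at hv
  by_contra hshort
  have hlong : ∀ V, orbitPoint V = orbitPoint (i :: w) → a.den < V.length := fun V hV ↦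
    not_le.mp fun hle ↦ hshort ⟨V, hle, hV⟩
  have hclosed : (r : ℚ) ^ (i :: w).length * a + wordOffset r b (i :: w)
      = r ^ (j :: u).length * a + wordOffset r b (j :: u) := by
    simp only [orbitPoint, foldr_affine_eq] at hv
    exact_mod_cast hv.symm
  have hdvd := dvd_sub_of_pow_mul_add_eq (hlong _ rfl) (hlong _ hv) hclosed
  have hoffset : wordOffset r b (j :: u) - wordOffset r b (i :: w)
      = r * (wordOffset r b u - wordOffset r b w) + (b j - b i) := by
    simp only [wordOffset]
    ring
  rw [hoffset] at hdvd
  exact hb j i hij.symm ((dvd_add_right (dvd_mul_right _ _)).mp hdvd)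

theorem stmt7 {m : ℕ} (r : ℤ) (hr : 1 < |r|) (b : Fin m → ℤ)
    (hb : ∀ i j : Fin m, i ≠ j → ¬ r ∣ (b i - b j))
    (a : ℚ) (i j : Fin m) (hij : i ≠ j) :
    Set.Finite
      ((fun x : ℝ => (r : ℝ) * x + (b i : ℝ)) ''
          forwardOrbit (fun k : Fin m => fun x : ℝ => (r : ℝ) * x + (b k : ℝ)) (a : ℝ) ∩
        (fun x : ℝ => (r : ℝ) * x + (b j : ℝ)) ''
          forwardOrbit (fun k : Fin m => fun x : ℝ => (r : ℝ) * x + (b k : ℝ)) (a : ℝ)) :=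
  stmt7_general r b hb a i j hij
end

section
/- Let $\F=\{f_i(x)=r_ix+b_i\}_{i=1}^m$ with all $|r_i|>1$ sharing a common fixed point $x_0$. Then for every $a\in\mathbb{R}$, the lower and upper mass dimensions of $\fo_\F(a)$ are both $0$; that is, $\lim_{h\to\infty}\frac{\log\#(\fo_\F(a)\cap[-h,h])}{\log h}=0$. -/
open Filter Topology Asymptotics

theorem List.prod_map_eq_prod_pow_count {ι M : Type*} [Fintype ι] [DecidableEq ι] [CommMonoid M]
    (w : List ι) (f : ι → M) : (w.map f).prod = ∏ i, f i ^ w.count i := by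
  rw [Finset.prod_list_map_count]
  refine Finset.prod_subset (Finset.subset_univ _) fun i _ hi => ?_
  rw [List.count_eq_zero_of_not_mem (mt List.mem_toFinset.2 hi), pow_zero]

theorem Finite.exists_lt_forall_le {ι : Type*} [Finite ι] {f : ι → ℝ} {a : ℝ}
    (h : ∀ i, a < f i) : ∃ c, a < c ∧ ∀ i, c ≤ f i := by
  have hnear : ∀ᶠ c in 𝓝[>] a, ∀ i, c ≤ f i :=
    nhdsWithin_le_nhds (eventually_all.2 fun i => (eventually_lt_nhds (h i)).mono fun _ => le_of_lt)
  obtain ⟨c, hc, hca⟩ := (hnear.and self_mem_nhdsWithin).exists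
  exact ⟨c, hca, hc⟩

theorem isLittleO_log_mul_add_one_id {K : ℝ} (hK : 0 < K) :
    (fun t => Real.log (K * t + 1)) =o[atTop] id := by
  have hlin : (fun t => K * t + 1) =O[atTop] id :=
    ((isBigO_refl id atTop).const_mul_left K).add (isLittleO_const_id_atTop 1).isBigO
  exact (Real.isLittleO_log_id_atTop.comp_tendsto
    (tendsto_atTop_add_const_right _ 1 (tendsto_id.const_mul_atTop hK))).trans_isBigO hlin

theorem tendsto_log_div_log_of_le_pow_log {N : ℝ → ℕ} {K : ℝ} (hK : 0 < K) (m : ℕ)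
    (hN : ∀ᶠ h in atTop, (N h : ℝ) ≤ (K * Real.log h + 1) ^ m) :
    Tendsto (fun h => Real.log (N h) / Real.log h) atTop (𝓝 0) := by
  have hupper :
      Tendsto (fun h => m * (Real.log (K * Real.log h + 1) / Real.log h)) atTop (𝓝 0) := by
    simpa using ((isLittleO_log_mul_add_one_id hK).tendsto_div_nhds_zero.comp
      Real.tendsto_log_atTop).const_mul (m : ℝ)
  refine tendsto_of_tendsto_of_tendsto_of_le_of_le' tendsto_const_nhds hupper ?_ ?_
  · filter_upwards [eventually_ge_atTop 1] with h hh
    exact div_nonneg (Real.log_natCast_nonneg _) (Real.log_nonneg hh)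
  · filter_upwards [hN, eventually_ge_atTop 1] with h hNh hh
    have hlog : 0 ≤ Real.log h := Real.log_nonneg hh
    have hbase : 1 ≤ K * Real.log h + 1 := by nlinarith
    have hbound : Real.log (N h) ≤ m * Real.log (K * Real.log h + 1) := by
      rw [← Real.log_pow]
      rcases (N h).eq_zero_or_pos with h0 | hpos
      · simpa [h0] using Real.log_nonneg (one_le_pow₀ hbase)
      · exact Real.log_le_log (by exact_mod_cast hpos) hNh
    rw [mul_div_assoc']
    exact div_le_div_of_nonneg_right hbound hlog

theorem forwardOrbit_subset_singleton {X ι : Type*} {f : ι → X → X} {a : X}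
    (hfix : ∀ i, f i a = a) : forwardOrbit f a ⊆ {a} := by
  rintro x ⟨w, -, rfl⟩
  induction w with
  | nil => rfl
  | cons i w ih => simp_all

section DegenerateAffine

variable {ι : Type*} {r b : ι → ℝ} {x0 : ℝ}

theorem foldr_affine_eq_of_fixed (hfix : ∀ i, r i * x0 + b i = x0) (a : ℝ) (w : List ι) :
    w.foldr (fun i y => r i * y + b i) a = (w.map r).prod * (a - x0) + x0 := by
  induction w with
  | nil => simp
  | cons i w ih =>
    simp only [List.foldr_cons, ih, List.map_cons, List.prod_cons]
    linear_combination hfix i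

theorem pow_length_le_abs_prod_map {c : ℝ} (hc : 0 ≤ c) (hcr : ∀ i, c ≤ |r i|)
    (w : List ι) : c ^ w.length ≤ |(w.map r).prod| := by
  induction w with
  | nil => simp
  | cons i w ih =>
    rw [List.map_cons, List.prod_cons, List.length_cons, abs_mul, pow_succ']
    exact mul_le_mul (hcr i) ih (by positivity) (abs_nonneg _)

theorem ncard_forwardOrbit_inter_le [Fintype ι] (hfix : ∀ i, r i * x0 + b i = x0) (a : ℝ)
    (S : Set ℝ) {t : ℝ} (ht : 0 ≤ t)
    (hS : ∀ w : List ι, w.foldr (fun i y => r i * y + b i) a ∈ S → (w.length : ℝ) ≤ t) :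
    ((forwardOrbit (fun i x => r i * x + b i) a ∩ S).ncard : ℝ)
      ≤ (t + 1) ^ Fintype.card ι := by
  classical
  set n := ⌊t⌋₊
  let g : (ι → Fin (n + 1)) → ℝ := fun k => (∏ i, r i ^ (k i : ℕ)) * (a - x0) + x0
  have hsub : forwardOrbit (fun i x => r i * x + b i) a ∩ S ⊆ Set.range g := by
    rintro x ⟨⟨w, -, rfl⟩, hx⟩
    have hlen : w.length ≤ n := Nat.le_floor (hS w hx)
    refine ⟨fun i => ⟨w.count i, Nat.lt_succ_of_le (List.count_le_length.trans hlen)⟩, ?_⟩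
    simp [g, foldr_affine_eq_of_fixed hfix, List.prod_map_eq_prod_pow_count]
  have hcard : (forwardOrbit (fun i x => r i * x + b i) a ∩ S).ncard
      ≤ (n + 1) ^ Fintype.card ι := calc
    _ ≤ (Set.range g).ncard := Set.ncard_le_ncard hsub (Set.finite_range g)
    _ ≤ Nat.card (ι → Fin (n + 1)) := by
      rw [← Nat.card_coe_set_eq]; exact Finite.card_range_le g
    _ = (n + 1) ^ Fintype.card ι := by simp
  calc _ ≤ ((n : ℝ) + 1) ^ Fintype.card ι := by exact_mod_cast hcard
    _ ≤ (t + 1) ^ Fintype.card ι := by gcongr; exact Nat.floor_le ht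

theorem eventually_length_le_mul_log (hfix : ∀ i, r i * x0 + b i = x0) {c : ℝ} (hc : 1 < c)
    (hcr : ∀ i, c ≤ |r i|) {a : ℝ} (ha : a ≠ x0) :
    ∀ᶠ h in atTop, ∀ w : List ι, w.foldr (fun i y => r i * y + b i) a ∈ Set.Icc (-h) h →
      (w.length : ℝ) ≤ 2 / Real.log c * Real.log h := by
  have hd : 0 < |a - x0| := abs_pos.2 (sub_ne_zero.2 ha)
  filter_upwards [eventually_ge_atTop 1, eventually_ge_atTop ((1 + |x0|) / |a - x0|)]
    with h h1 h2 w hw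
  rw [div_le_iff₀ hd] at h2
  have hprod : |(w.map r).prod| * |a - x0| ≤ h ^ 2 * |a - x0| := calc
    _ = |w.foldr (fun i y => r i * y + b i) a - x0| := by
      rw [foldr_affine_eq_of_fixed hfix, add_sub_cancel_right, abs_mul]
    _ ≤ h + |x0| := (abs_sub _ _).trans (by linarith [abs_le.2 hw])
    _ ≤ h ^ 2 * |a - x0| := by
      nlinarith [mul_le_mul_of_nonneg_left h2 (by linarith : (0 : ℝ) ≤ h),
        mul_le_mul_of_nonneg_right h1 (abs_nonneg x0)]
  have hpow : c ^ w.length ≤ h ^ 2 :=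
    (pow_length_le_abs_prod_map (by linarith) hcr w).trans (le_of_mul_le_mul_right hprod hd)
  have hlog := Real.log_le_log (by positivity) hpow
  rw [Real.log_pow, Real.log_pow] at hlog
  rw [div_mul_eq_mul_div, le_div_iff₀ (Real.log_pos hc)]
  push_cast at hlog
  linarith

end DegenerateAffine

theorem stmt10 {m : ℕ} (r b : Fin m → ℝ) (hr : ∀ i, 1 < |r i|) (x0 : ℝ)
    (hfix : ∀ i, r i * x0 + b i = x0) (a : ℝ) :
    Filter.Tendsto
      (fun h : ℝ =>
        Real.log
            (Set.ncard (forwardOrbit (fun i : Fin m => fun x : ℝ => r i * x + b i) a ∩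
              Set.Icc (-h) h)) / Real.log h)
      Filter.atTop (nhds 0) := by
  obtain ⟨c, hc, hcr⟩ := Finite.exists_lt_forall_le hr
  have hK : 0 < 2 / Real.log c := div_pos two_pos (Real.log_pos hc)
  refine tendsto_log_div_log_of_le_pow_log hK m ?_
  by_cases ha : a = x0
  · subst ha
    have horbit := forwardOrbit_subset_singleton (f := fun i x => r i * x + b i) hfix
    filter_upwards [eventually_ge_atTop 1] with h hh
    calc _ ≤ (1 : ℝ) := by
          exact_mod_cast (Set.ncard_le_ncard (Set.inter_subset_left.trans horbit)).trans
            (Set.ncard_singleton a).le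
      _ ≤ _ := one_le_pow₀ (by nlinarith [Real.log_nonneg hh])
  · filter_upwards [eventually_length_le_mul_log hfix hc hcr ha, eventually_ge_atTop 1]
      with h hlen hh
    simpa using ncard_forwardOrbit_inter_le hfix a _
      (mul_nonneg hK.le (Real.log_nonneg hh)) hlen
end
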